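/- Let A be a Noetherian local ring with residue field k, and let Q¹ → Q² → Q³ be an exact sequence of finitely generated free A-modules (with maps d₁, d₂) which remains exact after tensoring with k. Then M = Ker(d₁) is a free A-module. -/

import Mathlib

/-!
The cokernel `C = Q² / im d₁` embeds into `Q³` through `d₂`, and right exactness of `k ⊗ -`
shows that `k ⊗ C → k ⊗ Q³` is the injection given by exactness of the reduced sequence.
A map from a finite module into a finite free module over a local ring that is injective
modulo `m` is split, so `C` is projective. The short exact sequences
`0 → im d₁ → Q² → C → 0` and `0 → ker d₁ → Q¹ → im d₁ → 0` then split in turn, making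
`ker d₁` a finitely generated projective module over a local ring, hence free.
-/

theorem LinearMap.lTensor_liftQ_range_injective {R M N P Q : Type*} [CommRing R]
    [AddCommGroup M] [AddCommGroup N] [AddCommGroup P] [AddCommGroup Q]
    [Module R M] [Module R N] [Module R P] [Module R Q]
    (f : M →ₗ[R] N) (g : N →ₗ[R] P) (hfg : g ∘ₗ f = 0)
    (h : Function.Exact (f.lTensor Q) (g.lTensor Q)) :
    Function.Injective (((range f).liftQ g (range_le_ker_iff.mpr hfg)).lTensor Q) := by
  rw [injective_iff_map_eq_zero]
  intro x hx
  obtain ⟨y, rfl⟩ := lTensor_surjective Q (range f).mkQ_surjective x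
  rw [← comp_apply, ← lTensor_comp, Submodule.liftQ_mkQ] at hx
  obtain ⟨z, rfl⟩ := (h y).mp hx
  rw [← comp_apply, ← lTensor_comp, (LinearMap.exact_map_mkQ_range f).linearMap_comp_eq_zero,
    lTensor_zero, zero_apply]

theorem Module.Projective.of_exact {R M N P : Type*} [Ring R]
    [AddCommGroup M] [AddCommGroup N] [AddCommGroup P] [Module R M] [Module R N] [Module R P]
    [Module.Projective R N] [Module.Projective R P] {f : M →ₗ[R] N} {g : N →ₗ[R] P}
    (h : Function.Exact f g) (hf : Function.Injective f) (hg : Function.Surjective g) :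
    Module.Projective R M := by
  obtain ⟨r, hr⟩ := ((h.split_tfae hf hg).out 1 0).mpr
    (g.exists_rightInverse_of_surjective (LinearMap.range_eq_top.mpr hg))
  exact .of_split f r hr

/-- Lemma (3.2.3): over a Noetherian local ring `A` with residue field `k`,
if `Q¹ → Q² → Q³` is an exact sequence of finitely generated free `A`-modules
which remains exact after tensoring with `k`, then `M = ker d₁` is free. -/
theorem stmt0 (A : Type*) [CommRing A] [IsNoetherianRing A] [IsLocalRing A]
    (Q1 Q2 Q3 : Type*) [AddCommGroup Q1] [AddCommGroup Q2] [AddCommGroup Q3]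
    [Module A Q1] [Module A Q2] [Module A Q3]
    [Module.Free A Q1] [Module.Free A Q2] [Module.Free A Q3]
    [Module.Finite A Q1] [Module.Finite A Q2] [Module.Finite A Q3]
    (d1 : Q1 →ₗ[A] Q2) (d2 : Q2 →ₗ[A] Q3)
    (hex : Function.Exact d1 d2)
    (hexk : Function.Exact (d1.baseChange (IsLocalRing.ResidueField A))
      (d2.baseChange (IsLocalRing.ResidueField A))) :
    Module.Free A (LinearMap.ker d1) := by
  obtain ⟨s, hs⟩ := (IsLocalRing.split_injective_iff_lTensor_residueField_injective _).mpr
    (d1.lTensor_liftQ_range_injective d2 hex.linearMap_comp_eq_zero hexk)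
  have : Module.Projective A (Q2 ⧸ LinearMap.range d1) := .of_split _ s hs
  have : Module.Projective A (LinearMap.range d1) :=
    .of_exact (LinearMap.exact_subtype_mkQ _) Subtype.val_injective (Submodule.mkQ_surjective _)
  have : Module.Projective A (LinearMap.ker d1) :=
    .of_exact (f := (LinearMap.ker d1).subtype) (g := d1.rangeRestrict)
      (by rw [LinearMap.exact_iff, LinearMap.ker_rangeRestrict, Submodule.range_subtype])
      Subtype.val_injective d1.surjective_rangeRestrict
  exact Module.free_of_flat_of_isLocalRing
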